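/- arXiv:2004.13344 — 3 statements merged into one kernel-verified Lean document; each statement's English description precedes it below -/
import Mathlib

section
/- (Breteganolle–Huber–Carol inequality) Let (N₁,…,N_K) be a multinomial random vector with parameters n and (μ₁,…,μ_K), where μ_i ≥ 0 and ∑ μ_i = 1. Then for every λ > 0, Pr[ ∑_{i=1}^K |N_i/n − μ_i| ≥ λ ] ≤ 2^K · exp(−n·λ²/2). -/
open MeasureTheory ProbabilityTheory Real Finset

section BHC

lemma bhc_two_point_pos {p : ℝ} (hp0 : 0 ≤ p) (hp1 : p ≤ 1) (t : ℝ) :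
    0 < 1 - p + p * exp t := by
  rcases eq_or_lt_of_le hp0 with h | h
  · simp [← h]
  · nlinarith [exp_pos t, mul_pos h (exp_pos t)]

lemma bhc_hoeffding_two_point {p : ℝ} (hp0 : 0 ≤ p) (hp1 : p ≤ 1) (t : ℝ) :
    p * exp (t * (1 - p)) + (1 - p) * exp (-(t * p)) ≤ exp (t ^ 2 / 8) := by
  have hD : ∀ s : ℝ, 0 < 1 - p + p * exp s := bhc_two_point_pos hp0 hp1
  set g : ℝ → ℝ := fun s => s ^ 2 / 8 + s * p - log (1 - p + p * exp s) with hg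
  set g1 : ℝ → ℝ := fun s => s / 4 + p - p * exp s / (1 - p + p * exp s) with hg1
  have hDdiff : ∀ s : ℝ, HasDerivAt (fun u => 1 - p + p * exp u) (p * exp s) s := by
    intro s
    simpa using ((hasDerivAt_exp s).const_mul p).const_add (1 - p)
  have hgd : ∀ s : ℝ, HasDerivAt g (g1 s) s := by
    intro s
    have h1 : HasDerivAt (fun u : ℝ => u ^ 2 / 8 + u * p) (s / 4 + p) s := by
      have := ((hasDerivAt_pow 2 s).div_const 8).add ((hasDerivAt_id s).mul_const p)
      simpa [Pi.add_def] using this.congr_deriv (by ring)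
    have h2 : HasDerivAt (fun u => log (1 - p + p * exp u))
        (p * exp s / (1 - p + p * exp s)) s := (hDdiff s).log (hD s).ne'
    simpa [hg, hg1, Pi.sub_def] using h1.sub h2
  have hg1d : ∀ s : ℝ, HasDerivAt g1
      (1 / 4 - (p * exp s * (1 - p + p * exp s) - p * exp s * (p * exp s)) /
        (1 - p + p * exp s) ^ 2) s := by
    intro s
    have h1 : HasDerivAt (fun u : ℝ => u / 4 + p) (1 / 4) s := by
      simpa using ((hasDerivAt_id s).div_const 4).add_const p
    have h2 : HasDerivAt (fun u => p * exp u / (1 - p + p * exp u))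
        ((p * exp s * (1 - p + p * exp s) - p * exp s * (p * exp s)) /
          (1 - p + p * exp s) ^ 2) s := by
      exact ((hasDerivAt_exp s).const_mul p).div (hDdiff s) (hD s).ne'
    simpa [hg1, Pi.sub_def] using h1.sub h2
  have hg1mono : Monotone g1 := by
    refine monotone_of_deriv_nonneg (fun s => (hg1d s).differentiableAt) ?_
    intro s
    rw [(hg1d s).deriv]
    have hd := hD s
    rw [sub_nonneg, div_le_iff₀ (by positivity)]
    nlinarith [sq_nonneg (1 - p - p * exp s), exp_pos s, mul_nonneg hp0 (exp_pos s).le]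
  have hg10 : g1 0 = 0 := by
    simp [hg1]
  have hgnonneg : ∀ s : ℝ, 0 ≤ g s := by
    have hg0 : g 0 = 0 := by simp [hg]
    intro s
    rcases le_total 0 s with h | h
    · have hmono : MonotoneOn g (Set.Ici 0) := by
        refine monotoneOn_of_deriv_nonneg (convex_Ici 0)
          (fun u _ => ((hgd u).differentiableAt).continuousAt.continuousWithinAt)
          (fun u _ => ((hgd u).differentiableAt).differentiableWithinAt) ?_
        intro u hu
        rw [(hgd u).deriv, ← hg10]
        exact hg1mono (le_of_lt (by simpa using hu))
      have := hmono (Set.self_mem_Ici) (by exact h) h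
      rwa [hg0] at this
    · have hanti : AntitoneOn g (Set.Iic 0) := by
        refine antitoneOn_of_deriv_nonpos (convex_Iic 0)
          (fun u _ => ((hgd u).differentiableAt).continuousAt.continuousWithinAt)
          (fun u _ => ((hgd u).differentiableAt).differentiableWithinAt) ?_
        intro u hu
        rw [(hgd u).deriv, ← hg10]
        exact hg1mono (le_of_lt (by simpa using hu))
      have := hanti (by exact h) (Set.self_mem_Iic) h
      rwa [hg0] at this
  have hkey : 1 - p + p * exp t ≤ exp (t ^ 2 / 8 + t * p) := by
    have := hgnonneg t
    have hlog : log (1 - p + p * exp t) ≤ t ^ 2 / 8 + t * p := by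
      simp only [hg] at this; linarith
    calc 1 - p + p * exp t = exp (log (1 - p + p * exp t)) := (exp_log (hD t)).symm
      _ ≤ exp (t ^ 2 / 8 + t * p) := exp_le_exp.mpr hlog
  have : exp (-(t * p)) * (1 - p + p * exp t) ≤ exp (-(t * p)) * exp (t ^ 2 / 8 + t * p) :=
    mul_le_mul_of_nonneg_left hkey (exp_pos _).le
  calc p * exp (t * (1 - p)) + (1 - p) * exp (-(t * p))
      = exp (-(t * p)) * (1 - p + p * exp t) := by
        have he : exp (-(t * p)) * exp t = exp (t * (1 - p)) := by
          rw [← exp_add]; ring_nf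
        rw [mul_add, ← he]; ring
    _ ≤ exp (-(t * p)) * exp (t ^ 2 / 8 + t * p) := this
    _ = exp (t ^ 2 / 8) := by rw [← exp_add]; ring_nf


lemma bhc_fin_comp_integral {Ω : Type*} [MeasureSpace Ω] [IsProbabilityMeasure (ℙ : Measure Ω)]
    {K : ℕ} (X : Ω → Fin K) (hX : Measurable X) (g : Fin K → ℝ) :
    Integrable (fun ω => g (X ω)) ℙ ∧
      ∫ ω, g (X ω) ∂ℙ = ∑ i, (ℙ {ω | X ω = i}).toReal * g i := by
  have hrep : (fun ω => g (X ω)) =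
      fun ω => ∑ i, Set.indicator (X ⁻¹' {i}) (fun _ => g i) ω := by
    funext ω
    rw [Finset.sum_eq_single (X ω)]
    · exact (Set.indicator_of_mem rfl _).symm
    · intro b _ hb
      refine Set.indicator_of_notMem (fun h => hb ?_) _
      have : X ω = b := by simpa using h
      exact this.symm
    · intro h; exact absurd (Finset.mem_univ _) h
  have hint : ∀ i : Fin K, Integrable (Set.indicator (X ⁻¹' {i}) (fun _ => g i)) ℙ :=
    fun i => (integrable_const (g i)).indicator (hX (measurableSet_singleton i))
  constructor
  · rw [hrep]
    exact integrable_finset_sum _ (fun i _ => hint i)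
  · rw [hrep, integral_finset_sum _ (fun i _ => hint i)]
    refine Finset.sum_congr rfl (fun i _ => ?_)
    rw [integral_indicator_const (g i) (hX (measurableSet_singleton i)), smul_eq_mul]
    rfl


/-- Breteganolle–Huber–Carol inequality: if `X 1, …, X n` are i.i.d. samples from a
categorical distribution on `K` cells with probabilities `μ i`, and `N i` counts the
samples falling in cell `i`, then for every `λ > 0`,
`Pr[∑ i, |N i / n - μ i| ≥ λ] ≤ 2 ^ K * exp (-n * λ ^ 2 / 2)`. -/
theorem stmt_5 {Ω : Type*} [MeasureSpace Ω] [IsProbabilityMeasure (ℙ : Measure Ω)]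
    (n K : ℕ) (μ : Fin K → ℝ) (hμ0 : ∀ i, 0 ≤ μ i) (hμ1 : ∑ i, μ i = 1)
    (X : Fin n → Ω → Fin K) (hmeas : ∀ j, Measurable (X j))
    (hindep : iIndepFun X ℙ)
    (hdist : ∀ j i, (ℙ {ω | X j ω = i}) = ENNReal.ofReal (μ i))
    (N : Fin K → Ω → ℕ)
    (hN : ∀ i ω, N i ω = (Finset.univ.filter (fun j => X j ω = i)).card)
    (lam : ℝ) (hlam : 0 < lam) :
    (ℙ {ω | lam ≤ ∑ i, |(N i ω : ℝ) / n - μ i|}).toReal ≤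
      2 ^ K * Real.exp (-(n : ℝ) * lam ^ 2 / 2) := by
  have h2K : (1 : ℝ) ≤ 2 ^ K := one_le_pow₀ (by norm_num)
  rcases Nat.eq_zero_or_pos n with hn | hn
  · subst hn
    have h1 : (ℙ {ω | lam ≤ ∑ i, |(N i ω : ℝ) / 0 - μ i|}).toReal ≤ 1 := by
      rw [← ENNReal.toReal_one]
      exact ENNReal.toReal_mono ENNReal.one_ne_top prob_le_one
    simp only [Nat.cast_zero, neg_zero, zero_mul, zero_div, Real.exp_zero, mul_one]
    exact h1.trans h2K
  -- main case
  have hnR : (0 : ℝ) < n := by exact_mod_cast hn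
  -- the indicator function for a subset A
  set f : Finset (Fin K) → Fin K → ℝ :=
    fun A i => (if i ∈ A then (1 : ℝ) else 0) - ∑ k ∈ A, μ k with hf
  set W : Finset (Fin K) → Fin n → Ω → ℝ := fun A j => (f A) ∘ (X j) with hW
  set p : Finset (Fin K) → ℝ := fun A => ∑ k ∈ A, μ k with hp
  have hp0 : ∀ A, 0 ≤ p A := fun A => Finset.sum_nonneg (fun i _ => hμ0 i)
  have hp1 : ∀ A, p A ≤ 1 := by
    intro A
    rw [← hμ1]
    exact Finset.sum_le_sum_of_subset_of_nonneg (Finset.subset_univ A) (fun i _ _ => hμ0 i)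
  have hfmeas : ∀ A, Measurable (f A) := fun A => measurable_of_countable _
  have hWmeas : ∀ A j, Measurable (W A j) := fun A j => (hfmeas A).comp (hmeas j)
  -- counting identity
  have hcount : ∀ (A : Finset (Fin K)) ω,
      ∑ j, (if X j ω ∈ A then (1 : ℝ) else 0) = ∑ i ∈ A, (N i ω : ℝ) := by
    intro A ω
    have : ∀ i ω, (N i ω : ℝ) = ∑ j, (if X j ω = i then (1 : ℝ) else 0) := by
      intro i ω
      rw [hN i ω]
      push_cast [Finset.card_filter]
      rfl
    simp_rw [this]
    rw [Finset.sum_comm]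
    refine Finset.sum_congr rfl (fun j _ => ?_)
    exact (Finset.sum_ite_eq A (X j ω) (fun _ => (1 : ℝ))).symm
  have hWsum : ∀ (A : Finset (Fin K)) ω,
      (∑ j, W A j) ω = ∑ i ∈ A, (N i ω : ℝ) - n * p A := by
    intro A ω
    simp only [hW, hf, Finset.sum_apply, Function.comp_apply, Finset.sum_sub_distrib,
      Finset.sum_const, Finset.card_univ, Fintype.card_fin, nsmul_eq_mul]
    rw [hcount A ω]
    try ring
  -- total count
  have hNtot : ∀ ω, ∑ i, (N i ω : ℝ) = n := by
    intro ω
    have := hcount Finset.univ ω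
    simp only [Finset.mem_univ, if_true] at this
    rw [← this]
    simp
  -- union inclusion
  have hsub : {ω | lam ≤ ∑ i, |(N i ω : ℝ) / n - μ i|} ⊆
      ⋃ A : Finset (Fin K), {ω | (n : ℝ) * lam / 2 ≤ (∑ j, W A j) ω} := by
    intro ω hω
    simp only [Set.mem_setOf_eq] at hω
    set A : Finset (Fin K) := Finset.univ.filter (fun i => 0 ≤ (N i ω : ℝ) / n - μ i) with hA
    refine Set.mem_iUnion.mpr ⟨A, ?_⟩
    simp only [Set.mem_setOf_eq]
    rw [hWsum A ω]
    have hzero : ∑ i, ((N i ω : ℝ) / n - μ i) = 0 := by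
      rw [Finset.sum_sub_distrib, hμ1, ← Finset.sum_div, hNtot ω, div_self hnR.ne']
      ring
    have hsplit := Finset.sum_filter_add_sum_filter_not Finset.univ
      (fun i => 0 ≤ (N i ω : ℝ) / n - μ i) (fun i => (N i ω : ℝ) / n - μ i)
    have habs : ∑ i, |(N i ω : ℝ) / n - μ i| =
        ∑ i ∈ A, ((N i ω : ℝ) / n - μ i) -
          ∑ i ∈ Finset.univ.filter (fun i => ¬ (0 ≤ (N i ω : ℝ) / n - μ i)),
            ((N i ω : ℝ) / n - μ i) := by
      rw [← Finset.sum_filter_add_sum_filter_not Finset.univ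
        (fun i => 0 ≤ (N i ω : ℝ) / n - μ i) (fun i => |(N i ω : ℝ) / n - μ i|), ← hA]
      congr 1
      · exact Finset.sum_congr rfl (fun i hi => abs_of_nonneg (Finset.mem_filter.mp hi).2)
      · rw [← Finset.sum_neg_distrib]
        exact Finset.sum_congr rfl (fun i hi =>
          abs_of_neg (lt_of_not_ge (Finset.mem_filter.mp hi).2))
    have hAhalf : lam / 2 ≤ ∑ i ∈ A, ((N i ω : ℝ) / n - μ i) := by
      rw [← hA] at hsplit
      linarith [hω, habs, hsplit, hzero]
    have hexp : ∑ i ∈ A, ((N i ω : ℝ) / n - μ i) =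
        (∑ i ∈ A, (N i ω : ℝ) - n * p A) / n := by
      rw [Finset.sum_sub_distrib, ← Finset.sum_div, hp]
      field_simp
    rw [hexp, le_div_iff₀ hnR] at hAhalf
    nlinarith [hAhalf]
  -- Chernoff bound for each A
  have hchern : ∀ A : Finset (Fin K),
      (ℙ {ω | (n : ℝ) * lam / 2 ≤ (∑ j, W A j) ω}).toReal ≤
        Real.exp (-(n : ℝ) * lam ^ 2 / 2) := by
    intro A
    set t : ℝ := 2 * lam with ht
    have hWint : ∀ j : Fin n, Integrable (fun ω => exp (t * W A j ω)) ℙ := fun j =>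
      (bhc_fin_comp_integral (X j) (hmeas j) (fun i => exp (t * f A i))).1
    have hWindep : iIndepFun (fun j => W A j) ℙ :=
      hindep.comp (fun _ => f A) (fun _ => hfmeas A)
    have hmgf : ∀ j : Fin n, mgf (W A j) ℙ t ≤ exp (t ^ 2 / 8) := by
      intro j
      have hcomp := (bhc_fin_comp_integral (X j) (hmeas j) (fun i => exp (t * f A i))).2
      have hval : mgf (W A j) ℙ t = ∑ i, μ i * exp (t * f A i) := by
        rw [mgf]
        rw [show (fun ω => exp (t * W A j ω)) = (fun ω => (fun i => exp (t * f A i)) (X j ω))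
          from rfl] at *
        rw [hcomp]
        refine Finset.sum_congr rfl (fun i _ => ?_)
        rw [hdist j i, ENNReal.toReal_ofReal (hμ0 i)]
      have hsplitsum : ∑ i, μ i * exp (t * f A i) =
          p A * exp (t * (1 - p A)) + (1 - p A) * exp (-(t * p A)) := by
        rw [← Finset.sum_filter_add_sum_filter_not Finset.univ (· ∈ A)
          (fun i => μ i * exp (t * f A i)), Finset.filter_univ_mem]
        have hAc : ∑ i ∈ Finset.univ.filter (fun i => ¬ i ∈ A), μ i = 1 - p A := by
          have := Finset.sum_filter_add_sum_filter_not Finset.univ (· ∈ A) μ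
          rw [Finset.filter_univ_mem, hμ1] at this
          simp only [hp]
          linarith [this]
        congr 1
        · calc ∑ x ∈ A, μ x * exp (t * f A x)
              = ∑ x ∈ A, μ x * exp (t * (1 - p A)) := by
                refine Finset.sum_congr rfl (fun i hi => ?_)
                simp only [hf, hp]
                rw [if_pos hi]
            _ = p A * exp (t * (1 - p A)) := by rw [← Finset.sum_mul, hp]
        · calc ∑ x ∈ Finset.univ.filter (fun x => x ∉ A), μ x * exp (t * f A x)
              = ∑ x ∈ Finset.univ.filter (fun x => x ∉ A), μ x * exp (-(t * p A)) := by
                refine Finset.sum_congr rfl (fun i hi => ?_)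
                have hni : i ∉ A := (Finset.mem_filter.mp hi).2
                simp only [hf, hp]
                rw [if_neg hni]
                ring_nf
            _ = (1 - p A) * exp (-(t * p A)) := by rw [← Finset.sum_mul, hAc]
      rw [hval, hsplitsum]
      exact bhc_hoeffding_two_point (hp0 A) (hp1 A) t
    have hintsum : Integrable (fun ω => exp (t * (∑ j, W A j) ω)) ℙ :=
      hWindep.integrable_exp_mul_sum (fun j => hWmeas A j) (fun j _ => hWint j)
    have hchern0 := measure_ge_le_exp_mul_mgf (μ := ℙ) (X := ∑ j, W A j)
      ((n : ℝ) * lam / 2) (t := t) (by positivity) hintsum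
    have hprod : mgf (∑ j, W A j) ℙ t = ∏ j, mgf (W A j) ℙ t :=
      hWindep.mgf_sum (fun j => hWmeas A j) Finset.univ
    have hprodle : ∏ j : Fin n, mgf (W A j) ℙ t ≤ exp (t ^ 2 / 8) ^ n := by
      calc ∏ j : Fin n, mgf (W A j) ℙ t ≤ ∏ _j : Fin n, exp (t ^ 2 / 8) :=
            Finset.prod_le_prod (fun j _ => mgf_nonneg) (fun j _ => hmgf j)
        _ = exp (t ^ 2 / 8) ^ n := by rw [Finset.prod_const, Finset.card_univ, Fintype.card_fin]
    calc (ℙ {ω | (n : ℝ) * lam / 2 ≤ (∑ j, W A j) ω}).toReal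
        ≤ exp (-t * ((n : ℝ) * lam / 2)) * mgf (∑ j, W A j) ℙ t := hchern0
      _ ≤ exp (-t * ((n : ℝ) * lam / 2)) * exp (t ^ 2 / 8) ^ n := by
          rw [hprod]
          exact mul_le_mul_of_nonneg_left hprodle (exp_pos _).le
      _ = Real.exp (-(n : ℝ) * lam ^ 2 / 2) := by
          rw [← Real.exp_nat_mul, ← Real.exp_add]
          congr 1
          rw [ht]; ring
  -- union bound
  calc (ℙ {ω | lam ≤ ∑ i, |(N i ω : ℝ) / n - μ i|}).toReal
      ≤ (∑ A : Finset (Fin K), ℙ {ω | (n : ℝ) * lam / 2 ≤ (∑ j, W A j) ω}).toReal := by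
        refine ENNReal.toReal_mono (by
          exact (ENNReal.sum_lt_top.mpr (fun A _ => measure_lt_top _ _)).ne) ?_
        exact (measure_mono hsub).trans (measure_iUnion_fintype_le _ _)
    _ = ∑ A : Finset (Fin K), (ℙ {ω | (n : ℝ) * lam / 2 ≤ (∑ j, W A j) ω}).toReal :=
        ENNReal.toReal_sum (fun A _ => measure_ne_top _ _)
    _ ≤ ∑ _A : Finset (Fin K), Real.exp (-(n : ℝ) * lam ^ 2 / 2) :=
        Finset.sum_le_sum (fun A _ => hchern A)
    _ = 2 ^ K * Real.exp (-(n : ℝ) * lam ^ 2 / 2) := by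
        rw [Finset.sum_const, Finset.card_univ, Fintype.card_finset, Fintype.card_fin,
          nsmul_eq_mul]
        push_cast
        ring

end BHC
end

section
/- Let ℓ : Z → [0, M], let C₁,…,C_K partition Z, let N ⊆ Z, and let s₁,…,s_n ∈ Z with N_i = #{j : s_j ∈ C_i}. Suppose: (i) for all s_j and all z ∈ N, |ℓ(s_j) − ℓ(z)| ≤ σ; (ii) for every i and all z, s ∈ C_i, |ℓ(z) − ℓ(s)| ≤ ε. For each i let λ_i ∈ [0,1] and set γ = ∑_i λ_i·(N_i/n). Then |𝔼_μ[ℓ] − (1/n)∑_j ℓ(s_j)| ≤ γ·σ + (1−γ)·ε + M·∑_i |N_i/n − μ(C_i)|, where 𝔼_μ[ℓ] is decomposed as ∑_i (λ_i·𝔼[ℓ | C_i ∩ N] + (1−λ_i)·𝔼[ℓ | C_i ∩ Nᶜ])·μ(C_i) with λ_i the conditional probability of N within C_i. -/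
open MeasureTheory Finset
open scoped Classical

/-- Combined adversarial-robustness / partition-robustness generalization bound
(the main decomposition of Theorem 4.3): with `γ = ∑ i, λ_i * (N_i / n)` where `λ_i` is the
conditional probability of the neighborhood `Nb` within the cell `C i`,
`|𝔼_μ[ℓ] - (1/n) ∑_j ℓ (s j)| ≤ γσ + (1-γ)ε + M ∑ i |N_i/n - μ (C i)|`. -/
theorem stmt_8 {Z : Type*} [MeasurableSpace Z] (μ : Measure Z) [IsProbabilityMeasure μ]
    (ℓ : Z → ℝ) (M : ℝ) (hmeas : Measurable ℓ) (hℓ0 : ∀ z, 0 ≤ ℓ z) (hℓM : ∀ z, ℓ z ≤ M)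
    (K n : ℕ) (hn : 0 < n) (C : Fin K → Set Z)
    (hCmeas : ∀ i, MeasurableSet (C i))
    (hdisj : ∀ i j, i ≠ j → Disjoint (C i) (C j))
    (hcover : (⋃ i, C i) = Set.univ)
    (Nb : Set Z) (hNbmeas : MeasurableSet Nb)
    (s : Fin n → Z) (N : Fin K → ℕ)
    (hN : ∀ i, N i = (Finset.univ.filter (fun j => s j ∈ C i)).card)
    (σ ε : ℝ) (hσ : 0 ≤ σ) (hε : 0 ≤ ε)
    (hadv : ∀ j, ∀ z ∈ Nb, |ℓ (s j) - ℓ z| ≤ σ)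
    (hrob : ∀ i, ∀ z ∈ C i, ∀ z' ∈ C i, |ℓ z - ℓ z'| ≤ ε)
    (lam : Fin K → ℝ) (hlam0 : ∀ i, 0 ≤ lam i) (hlam1 : ∀ i, lam i ≤ 1)
    (hlamcond : ∀ i, (μ (C i ∩ Nb)).toReal = lam i * (μ (C i)).toReal)
    (γ : ℝ) (hγ : γ = ∑ i, lam i * ((N i : ℝ) / n)) :
    |(∫ z, ℓ z ∂μ) - (1 / n) * ∑ j, ℓ (s j)| ≤
      γ * σ + (1 - γ) * ε + M * ∑ i, |(N i : ℝ) / n - (μ (C i)).toReal| := by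
  have hn' : (0:ℝ) < n := by exact_mod_cast hn
  have hM0 : 0 ≤ M := le_trans (hℓ0 (s ⟨0, hn⟩)) (hℓM _)
  -- integrability
  have hint : Integrable ℓ μ := by
    refine (integrable_const M).mono' hmeas.aestronglyMeasurable ?_
    filter_upwards with z
    rw [Real.norm_eq_abs, abs_of_nonneg (hℓ0 z)]; exact hℓM z
  have hintOn : ∀ A : Set Z, IntegrableOn ℓ A μ := fun A => hint.integrableOn
  -- fiber map
  have hex : ∀ j, ∃ i, s j ∈ C i := by
    intro j
    have : s j ∈ ⋃ i, C i := hcover ▸ Set.mem_univ _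
    simpa using this
  choose g hg using hex
  have hgiff : ∀ j i, s j ∈ C i ↔ g j = i := by
    intro j i
    constructor
    · intro h
      by_contra hne
      exact Set.disjoint_left.mp (hdisj i (g j) (fun e => hne e.symm)) h (hg j)
    · rintro rfl; exact hg j
  set F : Fin K → Finset (Fin n) := fun i => Finset.univ.filter (fun j => s j ∈ C i) with hF
  have hFg : ∀ i, F i = Finset.univ.filter (fun j => g j = i) := by
    intro i
    apply Finset.filter_congr
    intro j _
    simp [hgiff j i]
  set q : Fin K → ℝ := fun i => (N i : ℝ) / n with hq
  set p : Fin K → ℝ := fun i => (μ (C i)).toReal with hp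
  set I : Fin K → ℝ := fun i => ∫ z in C i, ℓ z ∂μ with hI
  set T : Fin K → ℝ := fun i => (1 / n : ℝ) * ∑ j ∈ F i, ℓ (s j) with hT
  have hq0 : ∀ i, 0 ≤ q i := fun i => by positivity
  have hp0 : ∀ i, 0 ≤ p i := fun i => ENNReal.toReal_nonneg
  -- sum of q = 1
  have hcard : ∀ i, (N i : ℝ) = (F i).card := fun i => by rw [hN i]
  have hqsum : ∑ i, q i = 1 := by
    have h1 : ∑ i, ((F i).card : ℝ) = n := by
      have := Finset.sum_fiberwise_of_maps_to (fun j (_ : j ∈ Finset.univ) =>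
        Finset.mem_univ (g j)) (fun _ : Fin n => (1:ℝ))
      simp only [Finset.sum_const, nsmul_eq_mul, mul_one, Finset.card_univ,
        Fintype.card_fin] at this
      rw [← this]
      refine Finset.sum_congr rfl fun i _ => ?_
      rw [hFg i]
    simp only [hq, div_eq_mul_inv, ← Finset.sum_mul]
    rw [show (∑ i, (N i : ℝ)) = ∑ i, ((F i).card : ℝ) from
      Finset.sum_congr rfl fun i _ => hcard i, h1]
    field_simp
  -- decomposition of the integral
  have hIsum : (∫ z, ℓ z ∂μ) = ∑ i, I i := by
    rw [← setIntegral_univ, ← hcover,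
      integral_iUnion_fintype hCmeas (fun i j hij => hdisj i j hij) (fun i => hintOn (C i))]
  -- decomposition of the empirical sum
  have hTsum : (1 / n : ℝ) * ∑ j, ℓ (s j) = ∑ i, T i := by
    rw [← Finset.sum_fiberwise_of_maps_to (fun j (_ : j ∈ Finset.univ) =>
      Finset.mem_univ (g j)) (fun j => ℓ (s j)), Finset.mul_sum]
    refine Finset.sum_congr rfl fun i _ => ?_
    rw [hT]; simp only []
    rw [hFg i]
  -- bound on |I i| : 0 ≤ I i ≤ M * p i
  have hIbound : ∀ i, |I i| ≤ M * p i := by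
    intro i
    have := norm_setIntegral_le_of_norm_le_const_ae' (μ := μ) (s := C i) (f := ℓ)
      (measure_lt_top μ _)
      (Filter.Eventually.of_forall fun z _ => by
        rw [Real.norm_eq_abs, abs_of_nonneg (hℓ0 z)]; exact hℓM z)
    simpa [Real.norm_eq_abs, measureReal_def] using this
  -- key per-cell bound
  have key : ∀ i, |I i - T i| ≤ q i * (lam i * σ + (1 - lam i) * ε) + M * |q i - p i| := by
    intro i
    have hmix0 : 0 ≤ lam i * σ + (1 - lam i) * ε := by
      have := hlam0 i; have := hlam1 i; nlinarith
    by_cases hNi : N i = 0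
    · -- empty cell in sample
      have hFe : F i = ∅ := by
        have : (F i).card = 0 := by rw [← hN i]; exact hNi
        exact Finset.card_eq_zero.mp this
      have hTi : T i = 0 := by rw [hT]; simp [hFe]
      have hqi : q i = 0 := by simp [hq, hNi]
      rw [hTi, hqi]
      simp only [sub_zero, zero_mul, zero_sub, abs_neg, zero_add]
      calc |I i| ≤ M * p i := hIbound i
        _ = M * |p i| := by rw [abs_of_nonneg (hp0 i)]
    · -- nonempty cell in sample
      have hNpos : (0:ℝ) < N i := by
        exact_mod_cast Nat.pos_of_ne_zero hNi
      set a : ℝ := (∑ j ∈ F i, ℓ (s j)) / N i with ha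
      have hTa : T i = q i * a := by
        rw [hT, hq, ha]; field_simp
      -- a is an average of values
      have havg : ∀ (c : ℝ) (d : ℝ), (∀ j ∈ F i, |ℓ (s j) - c| ≤ d) → |a - c| ≤ d := by
        intro c d hd
        have h1 : |(∑ j ∈ F i, ℓ (s j)) - (N i : ℝ) * c| ≤ (N i : ℝ) * d := by
          have : (N i : ℝ) * c = ∑ j ∈ F i, c := by
            rw [Finset.sum_const, hcard i, nsmul_eq_mul]
          rw [this, ← Finset.sum_sub_distrib]
          calc |∑ j ∈ F i, (ℓ (s j) - c)| ≤ ∑ j ∈ F i, |ℓ (s j) - c| :=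
                Finset.abs_sum_le_sum_abs _ _
            _ ≤ ∑ j ∈ F i, d := Finset.sum_le_sum hd
            _ = (N i : ℝ) * d := by rw [Finset.sum_const, hcard i, nsmul_eq_mul]
        have : a - c = ((∑ j ∈ F i, ℓ (s j)) - (N i : ℝ) * c) / N i := by
          rw [ha]; field_simp
        rw [this, abs_div, abs_of_pos hNpos, div_le_iff₀ hNpos]
        linarith [h1]
      have ha0 : 0 ≤ a := by
        apply div_nonneg _ (le_of_lt hNpos)
        exact Finset.sum_nonneg fun j _ => hℓ0 _
      have haM : a ≤ M := by
        rw [ha, div_le_iff₀ hNpos]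
        calc ∑ j ∈ F i, ℓ (s j) ≤ ∑ j ∈ F i, M := Finset.sum_le_sum fun j _ => hℓM _
          _ = M * N i := by rw [Finset.sum_const, hcard i, nsmul_eq_mul]; ring
      by_cases hpi : p i = 0
      · -- zero-measure cell
        have hIi : I i = 0 := by
          have : μ (C i) = 0 := by
            have := hp0 i
            rw [hp] at hpi
            exact (ENNReal.toReal_eq_zero_iff _).mp hpi |>.resolve_right
              (ne_of_lt (measure_lt_top μ _))
          rw [hI]; simp only []
          rw [Measure.restrict_eq_zero.mpr this, integral_zero_measure]
        rw [hIi, hTa, hpi, zero_sub, abs_neg, sub_zero]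
        have : |q i * a| ≤ q i * M := by
          rw [abs_of_nonneg (mul_nonneg (hq0 i) ha0)]
          exact mul_le_mul_of_nonneg_left haM (hq0 i)
        calc |q i * a| ≤ q i * M := this
          _ ≤ q i * (lam i * σ + (1 - lam i) * ε) + M * |q i| := by
              rw [abs_of_nonneg (hq0 i)]
              nlinarith [hq0 i, hmix0]
      · -- main case
        have hppos : 0 < p i := lt_of_le_of_ne (hp0 i) (Ne.symm hpi)
        -- measures of the two pieces
        have hm1 : (μ (C i ∩ Nb)).toReal = lam i * p i := hlamcond i
        have hm2 : (μ (C i \ Nb)).toReal = p i - lam i * p i := by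
          have hadd := measure_inter_add_diff (C i) hNbmeas (μ := μ)
          have h1 : (μ (C i ∩ Nb)).toReal + (μ (C i \ Nb)).toReal = p i := by
            rw [← ENNReal.toReal_add (ne_of_lt (measure_lt_top μ _))
              (ne_of_lt (measure_lt_top μ _)), hadd]
          linarith [h1, hm1]
        -- step 1 : |I i - p i * a| ≤ p i * (lam i * σ + (1 - lam i) * ε)
        have hstep1 : |I i - p i * a| ≤ p i * (lam i * σ + (1 - lam i) * ε) := by
          have hconst : ∫ _ in C i, a ∂μ = p i * a := by
            rw [setIntegral_const, smul_eq_mul, measureReal_def]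
          have hsub : I i - p i * a = ∫ z in C i, (ℓ z - a) ∂μ := by
            rw [integral_sub (hintOn (C i)) integrableOn_const, hconst]
          have hintsub : IntegrableOn (fun z => ℓ z - a) (C i) μ :=
            (hintOn (C i)).sub integrableOn_const
          have hsplit := integral_inter_add_diff (s := C i) (t := Nb)
            (f := fun z => ℓ z - a) (μ := μ) hNbmeas hintsub
          -- bound on Nb part
          have hb1 : |∫ z in C i ∩ Nb, (ℓ z - a) ∂μ| ≤ σ * (lam i * p i) := by
            have := norm_setIntegral_le_of_norm_le_const_ae' (μ := μ) (s := C i ∩ Nb)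
              (f := fun z => ℓ z - a) (measure_lt_top μ _)
              (Filter.Eventually.of_forall fun z hz => by
                rw [Real.norm_eq_abs, abs_sub_comm]
                exact havg (ℓ z) σ fun j hj => hadv j z hz.2)
            rw [Real.norm_eq_abs] at this
            calc |∫ z in C i ∩ Nb, (ℓ z - a) ∂μ| ≤ σ * (μ (C i ∩ Nb)).toReal := this
              _ = σ * (lam i * p i) := by rw [hm1]
          -- bound on complement part
          have hb2 : |∫ z in C i \ Nb, (ℓ z - a) ∂μ| ≤ ε * (p i - lam i * p i) := by
            have := norm_setIntegral_le_of_norm_le_const_ae' (μ := μ) (s := C i \ Nb)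
              (f := fun z => ℓ z - a) (measure_lt_top μ _)
              (Filter.Eventually.of_forall fun z hz => by
                rw [Real.norm_eq_abs, abs_sub_comm]
                exact havg (ℓ z) ε fun j hj => by
                  have hjC : s j ∈ C i := (Finset.mem_filter.mp hj).2
                  exact hrob i (s j) hjC z hz.1)
            rw [Real.norm_eq_abs] at this
            calc |∫ z in C i \ Nb, (ℓ z - a) ∂μ| ≤ ε * (μ (C i \ Nb)).toReal := this
              _ = ε * (p i - lam i * p i) := by rw [hm2]
          rw [hsub, ← hsplit]
          calc |(∫ z in C i ∩ Nb, (ℓ z - a) ∂μ) + ∫ z in C i \ Nb, (ℓ z - a) ∂μ|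
              ≤ |∫ z in C i ∩ Nb, (ℓ z - a) ∂μ| + |∫ z in C i \ Nb, (ℓ z - a) ∂μ| :=
                abs_add_le _ _
            _ ≤ σ * (lam i * p i) + ε * (p i - lam i * p i) := add_le_add hb1 hb2
            _ = p i * (lam i * σ + (1 - lam i) * ε) := by ring
        -- step 2 : combine
        have hid : I i - q i * a =
            (q i / p i) * (I i - p i * a) + (1 - q i / p i) * I i := by
          field_simp
          ring
        rw [hTa, hid]
        have h1 : |(q i / p i) * (I i - p i * a)| ≤ q i * (lam i * σ + (1 - lam i) * ε) := by
          rw [abs_mul, abs_of_nonneg (div_nonneg (hq0 i) (hp0 i))]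
          calc (q i / p i) * |I i - p i * a|
              ≤ (q i / p i) * (p i * (lam i * σ + (1 - lam i) * ε)) :=
                mul_le_mul_of_nonneg_left hstep1 (div_nonneg (hq0 i) (hp0 i))
            _ = q i * (lam i * σ + (1 - lam i) * ε) := by field_simp
        have h2 : |(1 - q i / p i) * I i| ≤ M * |q i - p i| := by
          rw [abs_mul]
          have e1 : |1 - q i / p i| = |q i - p i| / p i := by
            rw [show (1 : ℝ) - q i / p i = (p i - q i) / p i by field_simp,
              abs_div, abs_of_pos hppos, abs_sub_comm]
          rw [e1]
          calc |q i - p i| / p i * |I i| ≤ |q i - p i| / p i * (M * p i) :=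
              mul_le_mul_of_nonneg_left (hIbound i)
                (div_nonneg (abs_nonneg _) (hp0 i))
            _ = M * |q i - p i| := by field_simp
        calc |(q i / p i) * (I i - p i * a) + (1 - q i / p i) * I i|
            ≤ |(q i / p i) * (I i - p i * a)| + |(1 - q i / p i) * I i| := abs_add_le _ _
          _ ≤ q i * (lam i * σ + (1 - lam i) * ε) + M * |q i - p i| := add_le_add h1 h2
  -- final assembly
  rw [hIsum, hTsum, ← Finset.sum_sub_distrib]
  calc |∑ i, (I i - T i)| ≤ ∑ i, |I i - T i| := Finset.abs_sum_le_sum_abs _ _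
    _ ≤ ∑ i, (q i * (lam i * σ + (1 - lam i) * ε) + M * |q i - p i|) :=
        Finset.sum_le_sum fun i _ => key i
    _ = γ * σ + (1 - γ) * ε + M * ∑ i, |(N i : ℝ) / n - (μ (C i)).toReal| := by
        rw [Finset.sum_add_distrib, ← Finset.mul_sum]
        have e1 : ∑ i, q i * (lam i * σ + (1 - lam i) * ε)
            = σ * ∑ i, lam i * q i + ε * (∑ i, q i - ∑ i, lam i * q i) := by
          rw [mul_sub, Finset.mul_sum, Finset.mul_sum, Finset.mul_sum,
            ← Finset.sum_sub_distrib, ← Finset.sum_add_distrib]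
          exact Finset.sum_congr rfl fun i _ => by ring
        have e2 : ∑ i, lam i * q i = γ := by
          rw [hγ]
        rw [e1, e2, hqsum]
        ring_nf
        rfl
end

section
/- Let X be a finite set and p, q : X → ℝ≥0 two probability mass functions with p(x) + q(x) > 0 for all x. Define F(D) = ∑_x p(x) log D(x) + q(x) log(1 − D(x)) for D : X → (0,1). Then F(D) ≤ F(D*) for all D, where D*(x) = p(x)/(p(x)+q(x)) (with the convention 0·log 0 = 0, and D* taking values in [0,1] interpreted by continuity). -/
open Real Finset

lemma aux_pointwise (a b t : ℝ) (ha : 0 ≤ a) (hb : 0 ≤ b) (hab : 0 < a + b)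
    (ht : 0 < t) (ht1 : t < 1) :
    a * Real.log t + b * Real.log (1 - t) ≤
      a * Real.log (a / (a + b)) + b * Real.log (1 - a / (a + b)) := by
  have h1t : 0 < 1 - t := by linarith
  have hbq : 1 - a / (a + b) = b / (a + b) := by field_simp; ring
  rw [hbq]
  rcases eq_or_lt_of_le ha with ha0 | hapos
  · rw [← ha0]
    simp only [zero_mul, zero_add, zero_div, Real.log_zero, mul_zero]
    have hb' : 0 < b := by linarith
    rw [div_self (ne_of_gt hb'), Real.log_one, mul_zero]
    have : Real.log (1 - t) ≤ 0 := Real.log_nonpos (by linarith) (by linarith)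
    nlinarith
  rcases eq_or_lt_of_le hb with hb0 | hbpos
  · rw [← hb0]
    simp only [zero_mul, add_zero, zero_div, Real.log_zero, mul_zero]
    rw [div_self (ne_of_gt hapos), Real.log_one, mul_zero]
    have : Real.log t ≤ 0 := Real.log_nonpos (by linarith) (by linarith)
    nlinarith
  · have h1 : Real.log t - Real.log (a / (a + b)) = Real.log (t * (a + b) / a) := by
      rw [← Real.log_div (by positivity) (by positivity)]
      congr 1; field_simp
    have h2 : Real.log (1 - t) - Real.log (b / (a + b)) =
        Real.log ((1 - t) * (a + b) / b) := by
      rw [← Real.log_div (by positivity) (by positivity)]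
      congr 1; field_simp
    have k1 : Real.log (t * (a + b) / a) ≤ t * (a + b) / a - 1 :=
      Real.log_le_sub_one_of_pos (by positivity)
    have k2 : Real.log ((1 - t) * (a + b) / b) ≤ (1 - t) * (a + b) / b - 1 :=
      Real.log_le_sub_one_of_pos (by positivity)
    have e1 : a * (t * (a + b) / a - 1) = t * (a + b) - a := by field_simp
    have e2 : b * ((1 - t) * (a + b) / b - 1) = (1 - t) * (a + b) - b := by field_simp
    nlinarith [mul_le_mul_of_nonneg_left k1 ha, mul_le_mul_of_nonneg_left k2 hb]

/-- Discrete optimal discriminator lemma: for probability mass functions `p, q` on a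
finite set `X` with `p x + q x > 0` everywhere, the functional
`F(D) = ∑ x, p x * log (D x) + q x * log (1 - D x)` over `D : X → (0,1)` satisfies
`F(D) ≤ F(D*)` for `D* x = p x / (p x + q x)` (with the conventions `0 · log 0 = 0` and
boundary values of `D*` interpreted by continuity, as realized by `Real.log 0 = 0`). -/
theorem stmt_19 {X : Type*} [Fintype X] (p q : X → ℝ)
    (hp0 : ∀ x, 0 ≤ p x) (hq0 : ∀ x, 0 ≤ q x)
    (hp1 : ∑ x, p x = 1) (hq1 : ∑ x, q x = 1)
    (hpos : ∀ x, 0 < p x + q x)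
    (D : X → ℝ) (hD : ∀ x, D x ∈ Set.Ioo (0 : ℝ) 1) :
    ∑ x, (p x * Real.log (D x) + q x * Real.log (1 - D x)) ≤
      ∑ x, (p x * Real.log (p x / (p x + q x)) +
        q x * Real.log (1 - p x / (p x + q x))) := by
  apply Finset.sum_le_sum
  intro x _
  exact aux_pointwise (p x) (q x) (D x) (hp0 x) (hq0 x) (hpos x) (hD x).1 (hD x).2
end
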